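/- (Fluctuation–decoherence relation) Let μ and ν be probability measures on ℝ, with μ having finite variance σ_E², and let λ and γ be their characteristic functions. Suppose that for all ω > 0 and all x ∈ (0, π) the characteristic-function uncertainty relation |γ(ω)|² + |λ(x/ω)|² ≤ β(x) holds, where β(x) = 2√2 (√2 − √(1 − cos x)) / (1 + cos x). Then σ_E ≥ (1/π) · sup_{ω > 0} ω |γ(ω)|. -/

import Mathlib

open MeasureTheory Real

/-- The bound function of the characteristic-function uncertainty relation of Rudnicki (2016). -/
noncomputable def rudnickiBeta (x : ℝ) : ℝ :=
  2 * Real.sqrt 2 * (Real.sqrt 2 - Real.sqrt (1 - Real.cos x)) / (1 + Real.cos x)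

/-- The characteristic function of a measure on `ℝ`. -/
noncomputable def charFunction (μ : Measure ℝ) (ω : ℝ) : ℂ :=
  ∫ E, Complex.exp (Complex.I * ω * E) ∂μ

/-!
With `m` and `σ²` the mean and variance of `μ`, the phase-shifted characteristic function
`e^{-itm} λ(t)` has real part `𝔼 cos (t (E - m))`,
which is at least `1 - t²σ²/2` because `cos y ≥ 1 - y²/2`; hence `|λ(t)|² ≥ 1 - t²σ²`.
On `(0, π)` the bound function simplifies to `β(x) = 2 / (1 + sin (x / 2))`, which tends to `1`
as `x → π⁻`. The uncertainty relation thus gives `|γ(ω)|² ≤ β(x) - 1 + (x/ω)²σ²` for all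
`x ∈ (0, π)`, and letting `x → π⁻` yields `ω |γ(ω)| ≤ π σ`.
-/

open Filter Topology ProbabilityTheory

lemma rudnickiBeta_eq {x : ℝ} (h0 : 0 ≤ x) (hπ : x < π) :
    rudnickiBeta x = 2 / (1 + sin (x / 2)) := by
  set s := sin (x / 2)
  have hs0 : 0 ≤ s := sin_nonneg_of_nonneg_of_le_pi (by linarith) (by linarith [pi_pos])
  have hs1 : s < 1 := by
    rw [← sin_pi_div_two]
    exact sin_lt_sin_of_lt_of_le_pi_div_two (by linarith) le_rfl (by linarith)
  have hcos : cos x = 1 - 2 * s ^ 2 := by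
    rw [← cos_two_mul_eq_one_sub, mul_div_cancel₀ x two_ne_zero]
  have hsqrt : √(1 - cos x) = √2 * s := by
    rw [hcos, sub_sub_cancel, sqrt_mul zero_le_two, sqrt_sq hs0]
  rw [rudnickiBeta, hsqrt, hcos, div_eq_div_iff (by nlinarith) (by linarith)]
  linear_combination (2 - 2 * s ^ 2) * (sq_sqrt (zero_le_two (α := ℝ)))

lemma tendsto_rudnickiBeta_pi : Tendsto rudnickiBeta (𝓝[<] π) (𝓝 1) := by
  have hcont : ContinuousAt (fun x ↦ 2 / (1 + sin (x / 2))) π :=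
    continuousAt_const.div (by fun_prop) (by norm_num)
  have hval : 2 / (1 + sin (π / 2)) = 1 := by norm_num
  refine (hval ▸ hcont.tendsto.mono_left nhdsWithin_le_nhds).congr' ?_
  filter_upwards [Ioo_mem_nhdsLT pi_pos] with x hx
  exact (rudnickiBeta_eq hx.1.le hx.2).symm

lemma charFunction_eq_charFun (μ : Measure ℝ) (ω : ℝ) : charFunction μ ω = charFun μ ω := by
  rw [charFun_apply_real, charFunction]
  congr 1 with E
  ring_nf

lemma one_sub_sq_mul_variance_div_two_le_norm_charFun {μ : Measure ℝ} [IsProbabilityMeasure μ]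
    (hμ : MemLp id 2 μ) (t : ℝ) : 1 - t ^ 2 * Var[id; μ] / 2 ≤ ‖charFun μ t‖ := by
  set m := μ[id]
  have hexp : Integrable (fun x : ℝ ↦ Complex.exp (↑(t * (x - m)) * Complex.I)) μ :=
    (integrable_const (1 : ℝ)).mono' (by fun_prop) (.of_forall fun x ↦ by
      rw [Complex.norm_exp_ofReal_mul_I])
  have hcos : Integrable (fun x : ℝ ↦ cos (t * (x - m))) μ :=
    (integrable_const (1 : ℝ)).mono' (by fun_prop) (.of_forall fun x ↦ abs_cos_le_one _)
  have hsq : Integrable (fun x : ℝ ↦ (x - m) ^ 2) μ :=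
    (memLp_two_iff_integrable_sq (by fun_prop)).1 (hμ.sub (memLp_const m))
  have hquad : Integrable (fun x : ℝ ↦ 1 - (t * (x - m)) ^ 2 / 2) μ := by
    simp_rw [mul_pow]
    exact (integrable_const 1).sub ((hsq.const_mul _).div_const 2)
  have hphase : ∫ x, Complex.exp (↑(t * (x - m)) * Complex.I) ∂μ
      = Complex.exp (↑(-(t * m)) * Complex.I) * charFun μ t := by
    rw [charFun_apply_real, ← integral_const_mul]
    congr 1 with x
    rw [← Complex.exp_add]
    push_cast
    ring_nf
  calc 1 - t ^ 2 * Var[id; μ] / 2 = ∫ x, (1 - (t * (x - m)) ^ 2 / 2) ∂μ := by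
        simp_rw [mul_pow, mul_div_assoc]
        rw [integral_sub (integrable_const 1) ((hsq.div_const 2).const_mul _), integral_const_mul,
          integral_div, variance_eq_integral measurable_id.aemeasurable]
        simp [m]
    _ ≤ ∫ x, cos (t * (x - m)) ∂μ :=
        integral_mono hquad hcos fun _ ↦ one_sub_sq_div_two_le_cos
    _ = (∫ x, Complex.exp (↑(t * (x - m)) * Complex.I) ∂μ).re := by
        rw [← RCLike.re_eq_complex_re, ← integral_re hexp]
        simp_rw [RCLike.re_eq_complex_re, Complex.exp_ofReal_mul_I_re]
    _ ≤ ‖charFun μ t‖ := by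
        rw [hphase]
        refine (Complex.re_le_norm _).trans_eq ?_
        rw [norm_mul, Complex.norm_exp_ofReal_mul_I, one_mul]

lemma one_sub_sq_mul_variance_le_sq_norm_charFun {μ : Measure ℝ} [IsProbabilityMeasure μ]
    (hμ : MemLp id 2 μ) (t : ℝ) : 1 - t ^ 2 * Var[id; μ] ≤ ‖charFun μ t‖ ^ 2 := by
  nlinarith [one_sub_sq_mul_variance_div_two_le_norm_charFun hμ t, sq_nonneg (‖charFun μ t‖ - 1)]

lemma sq_le_of_add_sq_norm_charFun_le_rudnickiBeta {μ : Measure ℝ} [IsProbabilityMeasure μ]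
    (hμ : MemLp id 2 μ) {a ω : ℝ}
    (h : ∀ x ∈ Set.Ioo 0 π, a + ‖charFun μ (x / ω)‖ ^ 2 ≤ rudnickiBeta x) :
    a ≤ (π / ω) ^ 2 * Var[id; μ] := by
  have hlim : Tendsto (fun x ↦ rudnickiBeta x - 1 + (x / ω) ^ 2 * Var[id; μ]) (𝓝[<] π)
      (𝓝 ((π / ω) ^ 2 * Var[id; μ])) := by
    have hquad : Continuous fun x : ℝ ↦ (x / ω) ^ 2 * Var[id; μ] := by fun_prop
    simpa using (tendsto_rudnickiBeta_pi.sub_const 1).add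
      (hquad.tendsto π |>.mono_left nhdsWithin_le_nhds)
  refine ge_of_tendsto hlim ?_
  filter_upwards [Ioo_mem_nhdsLT pi_pos] with x hx
  linarith [h x hx, one_sub_sq_mul_variance_le_sq_norm_charFun hμ (x / ω)]

theorem stmt_6_general (μ ν : Measure ℝ) [IsProbabilityMeasure μ]
    (h2 : Integrable (fun E => E ^ 2) μ)
    (hChUR : ∀ ω > (0 : ℝ), ∀ x ∈ Set.Ioo (0 : ℝ) π,
      ‖charFunction ν ω‖ ^ 2 + ‖charFunction μ (x / ω)‖ ^ 2 ≤ rudnickiBeta x) :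
    ENNReal.ofReal (1 / π) *
        (⨆ ω : {w : ℝ // 0 < w}, ENNReal.ofReal ((ω : ℝ) * ‖charFunction ν ω‖))
      ≤ ENNReal.ofReal (Real.sqrt ((∫ E, E ^ 2 ∂μ) - (∫ E, E ∂μ) ^ 2)) := by
  have hμ : MemLp id 2 μ := (memLp_two_iff_integrable_sq aestronglyMeasurable_id).2 h2
  have hvar : (∫ E, E ^ 2 ∂μ) - (∫ E, E ∂μ) ^ 2 = Var[id; μ] := by
    rw [variance_eq_sub hμ]
    rfl
  rw [hvar, ENNReal.mul_iSup]
  refine iSup_le fun ⟨ω, hω⟩ ↦ ?_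
  have hsq : ‖charFunction ν ω‖ ^ 2 ≤ (π / ω) ^ 2 * Var[id; μ] :=
    sq_le_of_add_sq_norm_charFun_le_rudnickiBeta hμ fun x hx ↦ by
      simpa only [charFunction_eq_charFun] using hChUR ω hω x hx
  rw [← ENNReal.ofReal_mul (by positivity), one_div]
  refine ENNReal.ofReal_le_ofReal ((inv_mul_le_iff₀ pi_pos).2 <|
    (pow_le_pow_iff_left₀ (by positivity) (by positivity) two_ne_zero).1 ?_)
  rw [mul_pow, mul_pow, sq_sqrt (variance_nonneg _ _)]
  rw [div_pow, div_mul_eq_mul_div, le_div_iff₀ (by positivity)] at hsq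
  linarith

/-- Fluctuation–decoherence relation: If the characteristic-function
uncertainty relation `|γ(ω)|² + |λ(x/ω)|² ≤ β(x)` holds for all `ω > 0` and `x ∈ (0, π)`,
then `σ_E ≥ (1/π) · sup_{ω > 0} ω |γ(ω)|` (the supremum taken in `ℝ≥0∞`). -/
theorem stmt_6 (μ ν : Measure ℝ) [IsProbabilityMeasure μ] [IsProbabilityMeasure ν]
    (h2 : Integrable (fun E => E ^ 2) μ)
    (hChUR : ∀ ω > (0 : ℝ), ∀ x ∈ Set.Ioo (0 : ℝ) π,
      ‖charFunction ν ω‖ ^ 2 + ‖charFunction μ (x / ω)‖ ^ 2 ≤ rudnickiBeta x) :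
    ENNReal.ofReal (1 / π) *
        (⨆ ω : {w : ℝ // 0 < w}, ENNReal.ofReal ((ω : ℝ) * ‖charFunction ν ω‖))
      ≤ ENNReal.ofReal (Real.sqrt ((∫ E, E ^ 2 ∂μ) - (∫ E, E ∂μ) ^ 2)) :=
  stmt_6_general μ ν h2 hChUR
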